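/- Let N ≥ 3 and q > N/(N−2). Set γ = 2/(q−1) and c = (γ·(N−2−γ))^(1/(q−1)), and define u : EuclideanSpace ℝ (Fin N) → ℝ by u(x) = c·‖x‖^(−γ). Then c > 0, u is positive and C² on the punctured space {x : x ≠ 0}, and −Δu(x) = u(x)^q for every x ≠ 0. (In particular the inequality −Δu ≥ u^q admits a positive solution in every exterior domain when q exceeds the critical exponent N/(N−2).) -/

import Mathlib

/-! The function `‖x‖ ^ a` is smooth off the origin with Hessian
`a ‖x‖^(a-2) ⟪v, w⟫ + a (a-2) ‖x‖^(a-4) ⟪x, v⟫ ⟪x, w⟫`; tracing it over an orthonormal basis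
(Parseval for the second term) gives `Δ ‖x‖^a = a (a + N - 2) ‖x‖^(a-2)`. For `a = -γ` this makes
`-Δu = c γ (N - 2 - γ) ‖x‖^(-γ-2)`. On the other side `u^q = c^q ‖x‖^(-γq)`, and the choice of `γ`
and `c` is exactly `γ q = γ + 2` and `c^(q-1) = γ (N - 2 - γ)`. The supercriticality
`q > N/(N-2)` is equivalent to `γ < N - 2`, which makes the base of `c` positive. -/

open MeasureTheory Filter Real Matrix
open scoped RealInnerProductSpace

/-- The Laplacian of `u` at `x`: the sum of pure second partial derivatives in the
directions of the standard orthonormal basis. -/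
noncomputable def laplacian (N : ℕ) (u : EuclideanSpace ℝ (Fin N) → ℝ)
    (x : EuclideanSpace ℝ (Fin N)) : ℝ :=
  ∑ i : Fin N, iteratedFDeriv ℝ 2 u x
    ![EuclideanSpace.basisFun (Fin N) ℝ i, EuclideanSpace.basisFun (Fin N) ℝ i]

open InnerProductSpace Laplacian Module

section NormRpow

variable {E : Type*} [NormedAddCommGroup E] [InnerProductSpace ℝ E] {x : E}

lemma hasFDerivAt_norm_rpow_of_ne_zero (a : ℝ) (hx : x ≠ 0) :
    HasFDerivAt (fun y : E => ‖y‖ ^ a) ((a * ‖x‖ ^ (a - 2)) • innerSL ℝ x) x := by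
  have hsq (b : ℝ) (y : E) : ‖y‖ ^ b = (‖y‖ ^ 2) ^ (b / 2) := by
    rw [← rpow_natCast_mul (norm_nonneg y)]
    congr 1
    ring
  have hx2 : ‖x‖ ^ 2 ≠ 0 := pow_ne_zero 2 (norm_ne_zero_iff.mpr hx)
  have h := (hasStrictFDerivAt_norm_sq x).hasFDerivAt.rpow_const (p := a / 2) (Or.inl hx2)
  simp only [← hsq] at h
  convert h using 1
  rw [hsq (a - 2), show (a - 2) / 2 = a / 2 - 1 by ring]
  ext v
  simp only [_root_.smul_apply, coe_innerSL_apply, smul_eq_mul, nsmul_eq_mul, Nat.cast_ofNat]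
  ring

lemma contDiffAt_norm_rpow_of_ne_zero {n : WithTop ℕ∞} (a : ℝ) (hx : x ≠ 0) :
    ContDiffAt ℝ n (fun y : E => ‖y‖ ^ a) x :=
  (contDiffAt_norm ℝ hx).rpow_const_of_ne (norm_ne_zero_iff.mpr hx)

lemma fderiv_norm_rpow_eventuallyEq (a : ℝ) (hx : x ≠ 0) :
    fderiv ℝ (fun y : E => ‖y‖ ^ a) =ᶠ[nhds x] fun y => (a * ‖y‖ ^ (a - 2)) • innerSL ℝ y := by
  filter_upwards [isOpen_ne.mem_nhds hx] with y hy
  exact (hasFDerivAt_norm_rpow_of_ne_zero a hy).fderiv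

lemma fderiv_fderiv_norm_rpow_apply (a : ℝ) (hx : x ≠ 0) (v w : E) :
    fderiv ℝ (fderiv ℝ fun y : E => ‖y‖ ^ a) x v w
      = a * ‖x‖ ^ (a - 2) * ⟪v, w⟫ + a * (a - 2) * ‖x‖ ^ (a - 4) * ⟪x, v⟫ * ⟪x, w⟫ := by
  have hcoef : HasFDerivAt (fun y : E => a * ‖y‖ ^ (a - 2))
      ((a * (a - 2) * ‖x‖ ^ (a - 4)) • innerSL ℝ x) x := by
    rw [show a - 4 = a - 2 - 2 by ring, mul_assoc, ← smul_smul]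
    exact (hasFDerivAt_norm_rpow_of_ne_zero (a - 2) hx).const_mul a
  -- `innerSL ℝ` is only semilinear in its type; over `ℝ` it is linear by definitional unfolding.
  have hinner : HasFDerivAt (fun y : E => innerSL ℝ y) (innerSL ℝ : E →L[ℝ] E →L[ℝ] ℝ) x :=
    (innerSL ℝ : E →L[ℝ] E →L[ℝ] ℝ).hasFDerivAt
  rw [(fderiv_norm_rpow_eventuallyEq a hx).fderiv_eq, (hcoef.fun_smul hinner).fderiv]
  simp only [_root_.add_apply, _root_.smul_apply, ContinuousLinearMap.smulRight_apply,
    innerSL_apply_apply, smul_eq_mul]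
  rw [innerSL_apply_apply]

variable [FiniteDimensional ℝ E]

theorem laplacian_norm_rpow (a : ℝ) (hx : x ≠ 0) :
    Δ (fun y : E => ‖y‖ ^ a) x = a * (a + finrank ℝ E - 2) * ‖x‖ ^ (a - 2) := by
  simp only [laplacian_eq_iteratedFDeriv_stdOrthonormalBasis, iteratedFDeriv_two_apply,
    Matrix.cons_val_zero, Matrix.cons_val_one, fderiv_fderiv_norm_rpow_apply a hx,
    Finset.sum_add_distrib]
  set b := stdOrthonormalBasis ℝ E
  have hdiag : ∑ i, ⟪b i, b i⟫ = finrank ℝ E := by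
    simp [b.orthonormal.1]
  have hparseval : ∑ i, ⟪x, b i⟫ * ⟪x, b i⟫ = ‖x‖ ^ 2 := by
    simpa [real_inner_comm x, real_inner_self_eq_norm_sq] using b.sum_inner_mul_inner x x
  have hpow : ‖x‖ ^ (a - 4) * ‖x‖ ^ 2 = ‖x‖ ^ (a - 2) := by
    rw [← rpow_natCast, ← rpow_add (norm_pos_iff.mpr hx)]
    congr 1
    ring
  simp only [mul_assoc, ← Finset.mul_sum, hdiag, hparseval, hpow]
  ring


theorem laplacian_const_mul_norm_rpow (c a : ℝ) (hx : x ≠ 0) :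
    Δ (fun y : E => c * ‖y‖ ^ a) x = c * (a * (a + finrank ℝ E - 2) * ‖x‖ ^ (a - 2)) := by
  rw [← laplacian_norm_rpow a hx]
  exact laplacian_smul c (contDiffAt_norm_rpow_of_ne_zero a hx)

end NormRpow

lemma laplacian_eq_innerProductSpace_laplacian {N : ℕ} (u : EuclideanSpace ℝ (Fin N) → ℝ)
    (x : EuclideanSpace ℝ (Fin N)) : laplacian N u x = Δ u x := by
  rw [laplacian_eq_iteratedFDeriv_orthonormalBasis u (EuclideanSpace.basisFun (Fin N) ℝ)]
  rfl

lemma two_div_sub_one_pos_and_lt {n q : ℝ} (hn : 2 < n) (hq : n / (n - 2) < q) :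
    0 < 2 / (q - 1) ∧ 2 / (q - 1) < n - 2 := by
  have hn2 : 0 < n - 2 := by linarith
  have hq' : n < q * (n - 2) := (div_lt_iff₀ hn2).mp hq
  have hq1 : 0 < q - 1 := by nlinarith
  exact ⟨by positivity, by rw [div_lt_iff₀ hq1]; nlinarith⟩

lemma rpow_one_div_sub_one_rpow {A q : ℝ} (hA : 0 < A) (hq : q ≠ 1) :
    (A ^ (1 / (q - 1))) ^ q = A ^ (1 / (q - 1)) * A := by
  have hq1 : q - 1 ≠ 0 := sub_ne_zero.mpr hq
  rw [← rpow_mul hA.le, ← rpow_add_one hA.ne']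
  congr 1
  field_simp
  ring

/-- For `N ≥ 3` and `q > N/(N-2)`, with `γ = 2/(q-1)` and `c = (γ(N-2-γ))^(1/(q-1))`, the
function `u(x) = c‖x‖^(-γ)` is positive and `C²` on `{x ≠ 0}` and satisfies `-Δu = u^q`
there. -/
theorem supercritical_solution (N : ℕ) (hN : 3 ≤ N) (q : ℝ)
    (hq : (N : ℝ) / ((N : ℝ) - 2) < q)
    (γ c : ℝ) (hγ : γ = 2 / (q - 1)) (hc : c = (γ * ((N : ℝ) - 2 - γ)) ^ (1 / (q - 1)))
    (u : EuclideanSpace ℝ (Fin N) → ℝ)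
    (hu : ∀ x : EuclideanSpace ℝ (Fin N), u x = c * ‖x‖ ^ (-γ)) :
    0 < c ∧
    (∀ x : EuclideanSpace ℝ (Fin N), x ≠ 0 → 0 < u x) ∧
    ContDiffOn ℝ 2 u {x : EuclideanSpace ℝ (Fin N) | x ≠ 0} ∧
    (∀ x : EuclideanSpace ℝ (Fin N), x ≠ 0 → -laplacian N u x = u x ^ q) := by
  obtain ⟨hγ_pos, hγ_lt⟩ := two_div_sub_one_pos_and_lt (by exact_mod_cast hN) hq
  rw [← hγ] at hγ_pos hγ_lt
  have hq1 : q ≠ 1 := by rintro rfl; norm_num [hγ] at hγ_pos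
  have hA : 0 < γ * ((N : ℝ) - 2 - γ) := mul_pos hγ_pos (by linarith)
  have hc_pos : 0 < c := hc ▸ rpow_pos_of_pos hA _
  have hu_eq : u = fun y => c * ‖y‖ ^ (-γ) := funext hu
  refine ⟨hc_pos, fun x hx => ?_, fun x hx => ?_, fun x hx => ?_⟩
  · rw [hu]
    exact mul_pos hc_pos (rpow_pos_of_pos (norm_pos_iff.mpr hx) _)
  · rw [hu_eq]
    exact (contDiffAt_const.mul (contDiffAt_norm_rpow_of_ne_zero (-γ) hx)).contDiffWithinAt
  · have hexp : -γ * q = -γ - 2 := by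
      rw [hγ]; field_simp [sub_ne_zero.mpr hq1]; ring
    rw [laplacian_eq_innerProductSpace_laplacian, hu_eq, laplacian_const_mul_norm_rpow c (-γ) hx,
      finrank_euclideanSpace_fin, mul_rpow hc_pos.le (rpow_nonneg (norm_nonneg x) _),
      ← rpow_mul (norm_nonneg x), hexp, hc, rpow_one_div_sub_one_rpow hA hq1, ← hc]
    ring
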